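/- arXiv:1703.09873 — 5 statements merged into one kernel-verified Lean document; each statement's English description precedes it below -/
import Mathlib

section
/- Let j be a positive integer and let G be a cubic graph with girth at least 2j+2. If C is a (2j+1)-independent set in G, then G contains an independent set of size exactly (2^{j+1} − 1)·|C|. -/
/-!
Around each `c ∈ C` take the vertices whose distance from `c` is at most `j` and has the parity
of `j`. Since the girth exceeds `2j + 1`, the ball of radius `j` around `c` is a tree: no edge
joins two vertices at the same distance from `c`, and every vertex at distance `k + 1 ≤ j` has
exactly one neighbour at distance `k`. So the chosen set is independent, and by double counting
the sphere of radius `k ≥ 1` has `3 · 2 ^ (k - 1)` vertices, which makes the set of size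
`2 ^ (j + 1) - 1`. Two such sets around distinct points of `C` are disjoint and joined by no edge,
because their centres are more than `2j + 1` apart.
-/

open SimpleGraph Finset

/-- A set `S` is `i`-independent in `G` if any two distinct vertices of `S`
are at distance at least `i + 1`. -/
def pIndep {V : Type*} (G : SimpleGraph V) (i : ℕ) (S : Finset V) : Prop :=
  ∀ x ∈ S, ∀ y ∈ S, x ≠ y → ((i + 1 : ℕ) : ℕ∞) ≤ G.edist x y

namespace SimpleGraph

variable {V : Type*} {G : SimpleGraph V} {a b c u v w x y : V} {k m : ℕ}

lemma Walk.edist_add_edist_le_length (p : G.Walk a b) (hx : x ∈ p.support) :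
    G.edist a x + G.edist x b ≤ p.length := by
  classical
  calc G.edist a x + G.edist x b
      ≤ (p.takeUntil x hx).length + (p.dropUntil x hx).length :=
        add_le_add (edist_le _) (edist_le _)
    _ = p.length := by
        rw [← Nat.cast_add, ← Walk.length_append, p.take_spec hx]

lemma Walk.eq_of_mem_support_of_length_le_edist (p : G.Walk c a) (hx : x ∈ p.support)
    (hlen : p.length ≤ G.edist c x) : x = a := by
  have hsum := p.edist_add_edist_le_length hx
  have hfin : G.edist c x ≠ ⊤ :=
    ne_top_of_le_ne_top (ENat.natCast_ne_top _) (le_self_add.trans hsum)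
  have h := hsum.trans hlen
  rw [← edist_eq_zero_iff]
  exact nonpos_iff_eq_zero.mp ((ENat.add_le_add_iff_left hfin).mp (by rwa [add_zero]))

lemma Adj.edist_le_edist_add_one (h : G.Adj u v) : G.edist c v ≤ G.edist c u + 1 :=
  SimpleGraph.edist_triangle.trans_eq (by rw [edist_eq_one_iff_adj.mpr h])

lemma Adj.exists_edist_eq_of_edist_eq (h : G.Adj u v) (hu : G.edist c u = m) :
    ∃ n : ℕ, G.edist c v = n ∧ n ≤ m + 1 ∧ m ≤ n + 1 := by
  have hle : G.edist c v ≤ m + 1 := hu ▸ h.edist_le_edist_add_one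
  obtain ⟨n, hn⟩ := ENat.ne_top_iff_exists.mp (ne_top_of_le_ne_top (by simp) hle)
  have hge : G.edist c u ≤ G.edist c v + 1 := h.symm.edist_le_edist_add_one
  rw [← hn] at hle hge
  rw [hu] at hge
  exact ⟨n, hn.symm, by exact_mod_cast hle, by exact_mod_cast hge⟩

lemma egirth_le_length_add_one_of_adj (h : G.Adj u v) (p : G.Walk v u)
    (hp : s(u, v) ∉ p.edges) : G.egirth ≤ p.length + 1 := by
  classical
  have hcycle : (Walk.cons h p.bypass).IsCycle :=
    (Walk.cons_isCycle_iff _ h).mpr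
      ⟨p.bypass_isPath, fun he => hp (p.edges_bypass_subset_edges he)⟩
  calc G.egirth ≤ (Walk.cons h p.bypass).length := egirth_le_length hcycle
    _ ≤ p.length + 1 := by
        rw [Walk.length_cons, Nat.cast_add, Nat.cast_one]
        gcongr
        exact p.length_bypass_le_length

lemma egirth_le_of_adj_of_edist_eq (h : G.Adj u v) (hu : G.edist c u = k)
    (hv : G.edist c v = k) : G.egirth ≤ 2 * k + 1 := by
  obtain ⟨p, hp⟩ := exists_walk_of_edist_eq_coe hu
  obtain ⟨q, hq⟩ := exists_walk_of_edist_eq_coe hv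
  have hvp : v ∉ p.support := fun hx =>
    h.ne (p.eq_of_mem_support_of_length_le_edist hx (by rw [hp, hv])).symm
  have huq : u ∉ q.support := fun hx =>
    h.ne (q.eq_of_mem_support_of_length_le_edist hx (by rw [hq, hu]))
  have hedge : s(u, v) ∉ (q.reverse.append p).edges := by
    rw [Walk.edges_append, Walk.edges_reverse, List.mem_append, List.mem_reverse]
    rintro (he | he)
    · exact huq (q.fst_mem_support_of_mem_edges he)
    · exact hvp (p.snd_mem_support_of_mem_edges he)
  calc G.egirth ≤ (q.reverse.append p).length + 1 := egirth_le_length_add_one_of_adj h _ hedge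
    _ = 2 * k + 1 := by simp [hp, hq, two_mul]

lemma egirth_le_of_adj_of_adj_of_edist_eq (h₁ : G.Adj v u) (h₂ : G.Adj v w) (hne : u ≠ w)
    (hu : G.edist c u = k) (hw : G.edist c w = k) (hv : G.edist c v = k + 1) :
    G.egirth ≤ 2 * k + 2 := by
  obtain ⟨p, hp⟩ := exists_walk_of_edist_eq_coe hu
  obtain ⟨q, hq⟩ := exists_walk_of_edist_eq_coe hw
  have hv_notMem {a : V} (r : G.Walk c a) (hr : r.length = k) : v ∉ r.support := fun hx => by
    obtain rfl := r.eq_of_mem_support_of_length_le_edist hx (by rw [hr, hv]; exact le_self_add)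
    have := edist_le r
    rw [hr, hv] at this
    norm_cast at this
    omega
  have hedge : s(v, u) ∉ ((p.reverse.append q).concat h₂.symm).edges := by
    rw [Walk.edges_concat, Walk.edges_append, Walk.edges_reverse]
    simp only [List.concat_eq_append, List.mem_append, List.mem_singleton, List.mem_reverse,
      Sym2.eq_iff]
    rintro ((he | he) | he)
    · exact hv_notMem p hp (p.fst_mem_support_of_mem_edges he)
    · exact hv_notMem q hq (q.fst_mem_support_of_mem_edges he)
    · rcases he with ⟨hwv, -⟩ | ⟨-, hwu⟩
      · exact h₂.ne hwv
      · exact hne hwu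
  calc G.egirth ≤ ((p.reverse.append q).concat h₂.symm).length + 1 :=
        egirth_le_length_add_one_of_adj h₁ _ hedge
    _ = 2 * k + 2 := by simp [hp, hq]; ring

lemma exists_adj_edist_eq_of_edist_eq_add_one (hv : G.edist c v = k + 1) :
    ∃ u, G.Adj u v ∧ G.edist c u = k := by
  rw [← Nat.cast_succ] at hv
  obtain ⟨p, hp⟩ := exists_walk_of_edist_eq_coe hv
  have hadj := p.adj_penultimate (by simp [← Walk.length_eq_zero_iff, hp])
  obtain ⟨n, hn, -, hkn⟩ := hadj.symm.exists_edist_eq_of_edist_eq hv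
  have hle := p.edist_add_edist_le_length (p.getVert_mem_support (p.length - 1))
  rw [hn, edist_eq_one_iff_adj.mpr hadj, hp] at hle
  norm_cast at hle
  exact ⟨_, hadj, by rw [hn]; norm_cast; omega⟩

section Spheres

variable [Fintype V]

noncomputable def sphereFinset (G : SimpleGraph V) (c : V) (k : ℕ) : Finset V :=
  {v | G.edist c v = k}

@[simp]
lemma mem_sphereFinset : v ∈ G.sphereFinset c k ↔ G.edist c v = k := by
  simp [sphereFinset]

lemma sphereFinset_zero : G.sphereFinset c 0 = {c} := by
  ext v
  rw [mem_sphereFinset, Nat.cast_zero, edist_eq_zero_iff, mem_singleton, eq_comm]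

lemma sphereFinset_one [DecidableRel G.Adj] : G.sphereFinset c 1 = G.neighborFinset c := by
  ext v
  simp

lemma card_filter_adj_sphereFinset_eq_one [DecidableRel G.Adj] (hg : 2 * k + 2 < G.egirth)
    (hv : v ∈ G.sphereFinset c (k + 1)) : #{u ∈ G.sphereFinset c k | G.Adj u v} = 1 := by
  rw [mem_sphereFinset, Nat.cast_succ] at hv
  obtain ⟨u, hadj, hu⟩ := exists_adj_edist_eq_of_edist_eq_add_one hv
  refine card_eq_one.mpr ⟨u, eq_singleton_iff_unique_mem.mpr ⟨by simp [hadj, hu], ?_⟩⟩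
  simp only [mem_filter, mem_sphereFinset, and_imp]
  intro w hw hadj'
  by_contra hne
  have := hg.trans_le (egirth_le_of_adj_of_adj_of_edist_eq hadj'.symm hadj.symm hne hw hu hv)
  norm_cast at this
  omega

lemma card_filter_adj_sphereFinset_eq_sub_one [DecidableRel G.Adj] {d : ℕ}
    (hreg : G.IsRegularOfDegree d) (hg : 2 * k + 3 < G.egirth)
    (hu : u ∈ G.sphereFinset c (k + 1)) :
    #{w ∈ G.sphereFinset c (k + 2) | G.Adj u w} = d - 1 := by
  classical
  have hparent :=
    card_filter_adj_sphereFinset_eq_one (hg.trans' (by norm_cast; omega)) hu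
  rw [mem_sphereFinset] at hu
  have hsplit : G.neighborFinset u =
      {w ∈ G.sphereFinset c k | G.Adj w u} ∪ {w ∈ G.sphereFinset c (k + 2) | G.Adj u w} := by
    ext w
    simp only [mem_neighborFinset, mem_union, mem_filter, mem_sphereFinset]
    refine ⟨fun hadj => ?_, ?_⟩
    swap
    · rintro (⟨-, hadj⟩ | ⟨-, hadj⟩)
      exacts [hadj.symm, hadj]
    obtain ⟨n, hn, hn_le, hn_ge⟩ := hadj.exists_edist_eq_of_edist_eq hu
    have hn_ne : n ≠ k + 1 := by
      rintro rfl
      have := hg.trans_le (egirth_le_of_adj_of_edist_eq hadj hu hn)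
      norm_cast at this
      omega
    obtain rfl | rfl : n = k ∨ n = k + 2 := by omega
    exacts [.inl ⟨hn, hadj.symm⟩, .inr ⟨hn, hadj⟩]
  have hdisj : Disjoint {w ∈ G.sphereFinset c k | G.Adj w u}
      {w ∈ G.sphereFinset c (k + 2) | G.Adj u w} := by
    refine Finset.disjoint_left.mpr fun w hw hw' => ?_
    simp only [mem_filter, mem_sphereFinset] at hw hw'
    have := hw.1.symm.trans hw'.1
    norm_cast at this
    omega
  have hdeg := card_neighborFinset_eq_degree G u
  rw [hreg u, hsplit, card_union_of_disjoint hdisj, hparent] at hdeg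
  omega

lemma card_sphereFinset_succ [DecidableRel G.Adj] {d : ℕ} (hreg : G.IsRegularOfDegree d)
    (hg : 2 * k + 2 < G.egirth) : #(G.sphereFinset c (k + 1)) = d * (d - 1) ^ k := by
  induction k with
  | zero => rw [sphereFinset_one, card_neighborFinset_eq_degree, hreg c, pow_zero, mul_one]
  | succ k ih =>
    have hdouble := card_mul_eq_card_mul G.Adj (s := G.sphereFinset c (k + 1))
      (t := G.sphereFinset c (k + 2))
      (fun u hu =>
        card_filter_adj_sphereFinset_eq_sub_one hreg (hg.trans' (by norm_cast; omega)) hu)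
      (fun v hv => card_filter_adj_sphereFinset_eq_one hg hv)
    rw [ih (hg.trans' (by norm_cast; omega))] at hdouble
    rw [pow_succ, ← mul_assoc, hdouble, mul_one]

noncomputable def alternateSpheres (G : SimpleGraph V) (c : V) (j : ℕ) : Finset V :=
  {v | ∃ m ≤ j, m % 2 = j % 2 ∧ G.edist c v = m}

variable {j : ℕ}

@[simp]
lemma mem_alternateSpheres :
    v ∈ G.alternateSpheres c j ↔ ∃ m ≤ j, m % 2 = j % 2 ∧ G.edist c v = m := by
  simp [alternateSpheres]

lemma edist_le_of_mem_alternateSpheres (hv : v ∈ G.alternateSpheres c j) : G.edist c v ≤ j := by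
  obtain ⟨m, hm, -, hv⟩ := mem_alternateSpheres.mp hv
  rw [hv]
  exact_mod_cast hm

lemma alternateSpheres_of_lt_two (hj : j < 2) : G.alternateSpheres c j = G.sphereFinset c j := by
  ext v
  simp only [mem_alternateSpheres, mem_sphereFinset]
  refine ⟨?_, fun hv => ⟨j, le_rfl, rfl, hv⟩⟩
  rintro ⟨m, hm, hmod, hv⟩
  obtain rfl : m = j := by omega
  exact hv

lemma alternateSpheres_add_two [DecidableEq V] :
    G.alternateSpheres c (j + 2) = G.alternateSpheres c j ∪ G.sphereFinset c (j + 2) := by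
  ext v
  simp only [mem_alternateSpheres, mem_sphereFinset, mem_union]
  constructor
  · rintro ⟨m, hm, hmod, hv⟩
    obtain rfl | hmj := eq_or_lt_of_le hm
    · exact .inr hv
    · exact .inl ⟨m, by omega, by omega, hv⟩
  · rintro (⟨m, hm, hmod, hv⟩ | hv)
    · exact ⟨m, by omega, by omega, hv⟩
    · exact ⟨j + 2, le_rfl, rfl, hv⟩

lemma card_alternateSpheres [DecidableRel G.Adj] (hreg : G.IsRegularOfDegree 3)
    (hg : 2 * j < G.egirth) : #(G.alternateSpheres c j) = 2 ^ (j + 1) - 1 := by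
  induction j using Nat.twoStepInduction with
  | zero => rw [alternateSpheres_of_lt_two (by norm_num), sphereFinset_zero, card_singleton]; rfl
  | one =>
    rw [alternateSpheres_of_lt_two (by norm_num),
      card_sphereFinset_succ (k := 0) hreg (by simpa using hg)]
    rfl
  | more j ih _ =>
    classical
    have hdisj : Disjoint (G.alternateSpheres c j) (G.sphereFinset c (j + 2)) := by
      refine Finset.disjoint_left.mpr fun v hv hv' => ?_
      have := mem_sphereFinset.mp hv' ▸ edist_le_of_mem_alternateSpheres hv
      norm_cast at this
      omega
    rw [alternateSpheres_add_two, card_union_of_disjoint hdisj,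
      ih (hg.trans_le' (by norm_cast; omega)),
      card_sphereFinset_succ (k := j + 1) hreg (hg.trans_eq' (by push_cast; ring))]
    have : 1 ≤ 2 ^ (j + 1) := Nat.one_le_two_pow
    rw [show 2 ^ (j + 2 + 1) = 4 * 2 ^ (j + 1) by ring]
    simp only [Nat.reduceSub]
    omega

lemma not_adj_of_mem_alternateSpheres (hg : 2 * j + 1 < G.egirth)
    (hx : x ∈ G.alternateSpheres c j) (hy : y ∈ G.alternateSpheres c j) : ¬ G.Adj x y := by
  intro hadj
  obtain ⟨m, hm, hmod, hx⟩ := mem_alternateSpheres.mp hx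
  obtain ⟨m', -, hmod', hy⟩ := mem_alternateSpheres.mp hy
  obtain ⟨n, hn, hn_le, hn_ge⟩ := hadj.exists_edist_eq_of_edist_eq hx
  have hnm : n = m' := by exact_mod_cast hn.symm.trans hy
  obtain rfl : m' = m := by omega
  have := hg.trans_le (egirth_le_of_adj_of_edist_eq hadj hx hy)
  norm_cast at this
  omega

end Spheres

end SimpleGraph

lemma pIndep.eq_of_edist_le {V : Type*} {G : SimpleGraph V} {j : ℕ} {C : Finset V} {c c' x y : V}
    (hC : pIndep G (2 * j + 1) C) (hc : c ∈ C) (hc' : c' ∈ C) (hx : G.edist c x ≤ j)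
    (hy : G.edist c' y ≤ j) (hxy : G.edist x y ≤ 1) : c = c' := by
  by_contra hne
  have hfar := hC c hc c' hc' hne
  have hnear : G.edist c c' ≤ j + 1 + j :=
    calc G.edist c c' ≤ G.edist c x + G.edist x y + G.edist y c' :=
          SimpleGraph.edist_triangle.trans (add_le_add_left SimpleGraph.edist_triangle _)
      _ ≤ j + 1 + j := by rw [SimpleGraph.edist_comm (u := y)]; gcongr
  have := hfar.trans hnear
  norm_cast at this
  omega

theorem stmt2_general {V : Type*} [Fintype V] (G : SimpleGraph V)
    [DecidableRel G.Adj] (hreg : G.IsRegularOfDegree 3)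
    (j : ℕ) (hg : ((2 * j + 2 : ℕ) : ℕ∞) ≤ G.egirth)
    (C : Finset V) (hC : pIndep G (2 * j + 1) C) :
    ∃ I : Finset V, (∀ x ∈ I, ∀ y ∈ I, ¬ G.Adj x y) ∧
      I.card = (2 ^ (j + 1) - 1) * C.card := by
  classical
  have hg' : 2 * (j : ℕ∞) + 1 < G.egirth := hg.trans_lt' (by norm_cast; omega)
  refine ⟨C.biUnion (G.alternateSpheres · j), ?_, ?_⟩
  · simp only [mem_biUnion]
    rintro x ⟨c, hc, hx⟩ y ⟨c', hc', hy⟩ hxy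
    obtain rfl := hC.eq_of_edist_le hc hc' (edist_le_of_mem_alternateSpheres hx)
      (edist_le_of_mem_alternateSpheres hy) (edist_le_one_iff_adj_or_eq.mpr (.inl hxy))
    exact not_adj_of_mem_alternateSpheres hg' hx hy hxy
  · rw [card_biUnion, mul_comm,
      sum_const_nat fun c _ => card_alternateSpheres hreg (hg'.trans_le' le_self_add)]
    intro c hc c' hc' hne
    refine Finset.disjoint_left.mpr fun v hv hv' => hne ?_
    exact hC.eq_of_edist_le hc hc' (edist_le_of_mem_alternateSpheres hv)
      (edist_le_of_mem_alternateSpheres hv') (by simp)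

theorem stmt2 {V : Type*} [Fintype V] [DecidableEq V] (G : SimpleGraph V)
    [DecidableRel G.Adj] (hreg : G.IsRegularOfDegree 3)
    (j : ℕ) (hj : 0 < j) (hg : ((2 * j + 2 : ℕ) : ℕ∞) ≤ G.egirth)
    (C : Finset V) (hC : pIndep G (2 * j + 1) C) :
    ∃ I : Finset V, (∀ x ∈ I, ∀ y ∈ I, ¬ G.Adj x y) ∧
      I.card = (2 ^ (j + 1) - 1) * C.card :=
  stmt2_general G hreg j hg C hC
end

section
/- Let G be a cubic graph on n vertices, and let C1 and C2 be disjoint vertex sets with C1 independent and C2 2-independent. Let Q be the set of vertices in C1 with no neighbor in C2, let ℓ be the number of edges of G with both endpoints outside C1 ∪ C2, and let s = |C1| + |C2|. Then 3(n − s) − 2ℓ = 3s − 2(|C1| − |Q|). -/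
/-!
Let `S = C1 ∪ C2`. Both sides count the darts leaving `S`: by 3-regularity they number
`3 |S| - 2 e(S)` and also `3 (n - |S|) - 2 ℓ`. Every edge inside `S` joins `C1` to `C2`, and by
2-independence of `C2` a vertex of `C1` has at most one neighbour in `C2`, so
`e(S) = |C1| - |Q|`.
-/

open SimpleGraph Finset

section
variable {V : Type*} {G : SimpleGraph V} {i : ℕ} {S : Finset V}

lemma pIndep.not_adj (h : pIndep G i S) (hi : 1 ≤ i) {x y : V} (hx : x ∈ S) (hy : y ∈ S) :
    ¬ G.Adj x y := by
  intro hxy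
  have := h x hx y hy hxy.ne
  rw [edist_eq_one_iff_adj.mpr hxy] at this
  have : i + 1 ≤ 1 := by exact_mod_cast this
  omega

lemma pIndep.eq_of_adj_of_adj (h : pIndep G i S) (hi : 2 ≤ i) {v u₁ u₂ : V}
    (hu₁ : u₁ ∈ S) (hu₂ : u₂ ∈ S) (h₁ : G.Adj v u₁) (h₂ : G.Adj v u₂) : u₁ = u₂ := by
  by_contra hne
  have := (h u₁ hu₁ u₂ hu₂ hne).trans (G.edist_triangle (v := v))
  rw [edist_eq_one_iff_adj.mpr h₁.symm, edist_eq_one_iff_adj.mpr h₂] at this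
  have : i + 1 ≤ 1 + 1 := by exact_mod_cast this
  omega

end

namespace SimpleGraph

variable {V : Type*} [Fintype V] {G : SimpleGraph V} [DecidableRel G.Adj]

lemma card_darts_swap (p q : V → Prop) [DecidablePred p] [DecidablePred q] :
    #{d : G.Dart | p d.fst ∧ q d.snd} = #{d : G.Dart | q d.fst ∧ p d.snd} :=
  card_bij' (fun d _ => d.symm) (fun d _ => d.symm) (by simp +contextual) (by simp +contextual)
    (by simp) (by simp)

variable [DecidableEq V]

lemma card_darts_fst_eq_sum_degree (p : V → Prop) [DecidablePred p] :
    #{d : G.Dart | p d.fst} = ∑ v with p v, G.degree v := by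
  rw [card_eq_sum_card_fiberwise (f := fun d : G.Dart => d.fst) (t := {v | p v})
    (fun d hd => by simpa using hd)]
  refine sum_congr rfl fun v hv => ?_
  rw [← dart_fst_fiber_card_eq_degree]
  congr 1
  ext d
  simp only [mem_filter, mem_univ, true_and] at hv ⊢
  exact ⟨And.right, fun h => ⟨h ▸ hv, h⟩⟩

lemma card_darts_fst_snd_eq_two_mul_card_edges (p : V → Prop) [DecidablePred p] :
    #{d : G.Dart | p d.fst ∧ p d.snd} = 2 * #{e ∈ G.edgeFinset | ∀ v ∈ e, p v} := by
  have hedge : ∀ d : G.Dart, (p d.fst ∧ p d.snd) ↔ ∀ v ∈ d.edge, p v := fun d => by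
    simp [Dart.edge, Sym2.mem_iff, or_imp, forall_and]
  rw [card_eq_sum_card_fiberwise (f := Dart.edge) (t := {e ∈ G.edgeFinset | ∀ v ∈ e, p v})
    (fun d hd => by simp_all [d.edge_mem])]
  rw [sum_const_nat fun e he => ?_, mul_comm]
  simp only [mem_filter, mem_edgeFinset] at he
  rw [← G.dart_edge_fiber_card e he.1]
  congr 1
  ext d
  simp only [mem_filter, mem_univ, true_and, hedge]
  exact ⟨And.right, fun h => ⟨h ▸ he.2, h⟩⟩

lemma sum_degree_filter_eq (p : V → Prop) [DecidablePred p] :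
    ∑ v with p v, G.degree v
      = 2 * #{e ∈ G.edgeFinset | ∀ v ∈ e, p v} + #{d : G.Dart | p d.fst ∧ ¬ p d.snd} := by
  rw [← card_darts_fst_eq_sum_degree, ← card_darts_fst_snd_eq_two_mul_card_edges,
    ← card_filter_add_card_filter_not (s := {d : G.Dart | p d.fst}) (p := fun d => p d.snd),
    filter_filter, filter_filter]

lemma sum_degree_add_two_mul_card_edges_not (p : V → Prop) [DecidablePred p] :
    ∑ v with p v, G.degree v + 2 * #{e ∈ G.edgeFinset | ∀ v ∈ e, ¬ p v}
      = ∑ v with ¬ p v, G.degree v + 2 * #{e ∈ G.edgeFinset | ∀ v ∈ e, p v} := by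
  have := card_darts_swap (G := G) p (fun v => ¬ p v)
  rw [sum_degree_filter_eq, sum_degree_filter_eq (fun v => ¬ p v)]
  simp only [not_not] at this ⊢
  omega

lemma card_darts_eq_card_filter_exists_adj {A B : Finset V}
    (hB : ∀ v, ∀ u₁ ∈ B, ∀ u₂ ∈ B, G.Adj v u₁ → G.Adj v u₂ → u₁ = u₂) :
    #{d : G.Dart | d.fst ∈ A ∧ d.snd ∈ B} = #{v ∈ A | ∃ u ∈ B, G.Adj v u} := by
  refine card_bij (fun d _ => d.fst) (fun d hd => ?_) (fun d₁ hd₁ d₂ hd₂ h => ?_) fun v hv => ?_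
  · simp only [mem_filter, mem_univ, true_and] at hd ⊢
    exact ⟨hd.1, d.snd, hd.2, d.adj⟩
  · simp only [mem_filter, mem_univ, true_and] at hd₁ hd₂
    exact Dart.ext _ _ (Prod.ext h (hB _ _ hd₁.2 _ hd₂.2 d₁.adj (h ▸ d₂.adj)))
  · simp only [mem_filter] at hv
    obtain ⟨hvA, u, huB, hvu⟩ := hv
    exact ⟨⟨(v, u), hvu⟩, by simp [hvA, huB], rfl⟩

lemma card_edges_union_eq_card_filter_exists_adj {C1 C2 : Finset V} (hdisj : Disjoint C1 C2)
    (h1 : pIndep G 1 C1) (h2 : pIndep G 2 C2) :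
    #{e ∈ G.edgeFinset | ∀ v ∈ e, v ∈ C1 ∪ C2} = #{v ∈ C1 | ∃ u ∈ C2, G.Adj v u} := by
  have hdarts : #{d : G.Dart | d.fst ∈ C1 ∪ C2 ∧ d.snd ∈ C1 ∪ C2}
      = #{d : G.Dart | d.fst ∈ C1 ∧ d.snd ∈ C2 ∨ d.fst ∈ C2 ∧ d.snd ∈ C1} := by
    refine congrArg card (filter_congr fun d _ => ?_)
    have h11 := h1.not_adj le_rfl (x := d.fst) (y := d.snd)
    have h22 := h2.not_adj one_le_two (x := d.fst) (y := d.snd)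
    have := d.adj
    simp only [mem_union]
    tauto
  have hdisj' : Disjoint ({d : G.Dart | d.fst ∈ C1 ∧ d.snd ∈ C2} : Finset _)
      ({d : G.Dart | d.fst ∈ C2 ∧ d.snd ∈ C1} : Finset _) :=
    disjoint_filter.mpr fun _ _ h h' => Finset.disjoint_left.mp hdisj h.1 h'.1
  apply Nat.eq_of_mul_eq_mul_left two_pos
  rw [← card_darts_fst_snd_eq_two_mul_card_edges, hdarts, filter_or,
    card_union_of_disjoint hdisj', card_darts_swap (· ∈ C2) (· ∈ C1),
    card_darts_eq_card_filter_exists_adj fun v _ hu₁ _ hu₂ => h2.eq_of_adj_of_adj le_rfl hu₁ hu₂,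
    two_mul]

end SimpleGraph

open Classical in
theorem stmt5 {V : Type*} [Fintype V] [DecidableEq V] (G : SimpleGraph V)
    [DecidableRel G.Adj] (hreg : G.IsRegularOfDegree 3)
    (C1 C2 : Finset V) (hdisj : Disjoint C1 C2)
    (hC1 : pIndep G 1 C1) (hC2 : pIndep G 2 C2) :
    (3 : ℤ) * ((Fintype.card V : ℤ) - (C1.card + C2.card))
      - 2 * (G.edgeFinset.filter (fun e => ∀ v ∈ e, v ∉ C1 ∪ C2)).card
    = 3 * (C1.card + C2.card)
      - 2 * ((C1.card : ℤ) - (C1.filter (fun v => ∀ u ∈ C2, ¬ G.Adj v u)).card) := by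
  have hcut := G.sum_degree_add_two_mul_card_edges_not (· ∈ C1 ∪ C2)
  simp only [hreg.degree_eq, sum_const, smul_eq_mul, filter_mem_eq_inter, univ_inter] at hcut
  have hcompl := card_filter_add_card_filter_not (s := univ) (p := (· ∈ C1 ∪ C2))
  have hsplit := card_filter_add_card_filter_not (s := C1) (p := fun v => ∃ u ∈ C2, G.Adj v u)
  simp only [not_exists, not_and, filter_mem_eq_inter, univ_inter, card_univ] at hcompl hsplit
  rw [card_edges_union_eq_card_filter_exists_adj hdisj hC1 hC2,
    card_union_of_disjoint hdisj] at hcut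
  rw [card_union_of_disjoint hdisj] at hcompl
  omega
end

section
/- Let G be a cubic graph on n vertices, and let C1 and C2 be disjoint vertex sets with C1 independent and C2 2-independent. If |C1| < 0.456n, then |C1| + |C2| < 0.652n. -/
/-!
Double count the edges at `S = C1 ∪ C2` in the cubic graph: `3|S| = 2 e(S) + e(S, V ∖ S)` with
`e(S, V ∖ S) ≤ 3 (n - |S|)`. Inside `S` only `C1`–`C2` edges occur, and since the closed
neighbourhoods of the 2-independent set `C2` are disjoint, each vertex of `C1` has at most one
neighbour in `C2`, so `e(S) ≤ |C1|`. Hence `4|C1| + 6|C2| ≤ 3n`, i.e.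
`|C1| + |C2| ≤ n/2 + |C1|/3 < 0.5n + 0.152n`.
-/

open SimpleGraph Finset

namespace pIndep

variable {V : Type*} {G : SimpleGraph V} {i : ℕ} {S : Finset V}

lemma not_adj_s6 (hS : pIndep G i S) (hi : 1 ≤ i) {x y : V} (hx : x ∈ S) (hy : y ∈ S) :
    ¬G.Adj x y := by
  intro hxy
  have hfar := hS x hx y hy hxy.ne
  rw [edist_eq_one_iff_adj.mpr hxy] at hfar
  exact absurd hfar (by norm_cast; omega)

variable [Fintype V] [DecidableEq V] [DecidableRel G.Adj]

lemma neighborFinset_inter_eq_empty (hS : pIndep G i S) (hi : 1 ≤ i) {v : V} (hv : v ∈ S) :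
    G.neighborFinset v ∩ S = ∅ :=
  eq_empty_of_forall_notMem fun u hu ↦ by
    rw [mem_inter, mem_neighborFinset] at hu
    exact hS.not_adj_s6 hi hv hu.2 hu.1

lemma card_neighborFinset_inter_le_one (hS : pIndep G i S) (hi : 2 ≤ i) (v : V) :
    #(G.neighborFinset v ∩ S) ≤ 1 := by
  refine card_le_one.2 fun u hu w hw ↦ by_contra fun huw ↦ ?_
  simp only [mem_inter, mem_neighborFinset] at hu hw
  have hfar : 2 < G.edist u w := lt_of_lt_of_le (by norm_cast; omega) (hS u hu.2 w hw.2 huw)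
  have hcommon : v ∈ G.commonNeighbors u w := G.mem_commonNeighbors.2 ⟨hu.1.symm, hw.1.symm⟩
  simp [(two_lt_edist_iff.1 hfar).2.2] at hcommon

lemma sum_card_neighborFinset_inter_le (hS : pIndep G i S) (hi : 2 ≤ i) (A : Finset V) :
    ∑ v ∈ A, #(G.neighborFinset v ∩ S) ≤ #A := by
  simpa using sum_le_card_nsmul A _ 1 fun v _ ↦ hS.card_neighborFinset_inter_le_one hi v

end pIndep

namespace SimpleGraph

variable {V : Type*} [Fintype V] [DecidableEq V] (G : SimpleGraph V) [DecidableRel G.Adj]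

lemma sum_card_neighborFinset_inter_comm (A B : Finset V) :
    ∑ v ∈ A, #(G.neighborFinset v ∩ B) = ∑ u ∈ B, #(G.neighborFinset u ∩ A) := by
  convert sum_card_bipartiteAbove_eq_sum_card_bipartiteBelow (s := A) (t := B) (r := G.Adj)
    using 3 with v _ u _
  · ext; simp [bipartiteAbove, and_comm]
  · ext; simp [bipartiteBelow, adj_comm, and_comm]

variable {G}

lemma IsRegularOfDegree.sum_card_neighborFinset_inter {d : ℕ} (hreg : G.IsRegularOfDegree d)
    (S : Finset V) : ∑ v, #(G.neighborFinset v ∩ S) = d * #S := by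
  rw [sum_card_neighborFinset_inter_comm, mul_comm, ← smul_eq_mul, ← sum_const]
  exact sum_congr rfl fun u _ ↦ by rw [inter_univ, card_neighborFinset_eq_degree, hreg u]

lemma IsRegularOfDegree.mul_card_le {d : ℕ} (hreg : G.IsRegularOfDegree d) (S : Finset V) :
    d * #S ≤ ∑ v ∈ S, #(G.neighborFinset v ∩ S) + d * #Sᶜ := by
  rw [← hreg.sum_card_neighborFinset_inter, ← sum_add_sum_compl S, mul_comm d, ← smul_eq_mul,
    ← sum_const]
  gcongr with v
  exact (card_le_card inter_subset_left).trans (by rw [card_neighborFinset_eq_degree, hreg v])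

end SimpleGraph

section

variable {V : Type*} [Fintype V] [DecidableEq V] {G : SimpleGraph V} [DecidableRel G.Adj]
  {C1 C2 : Finset V}

lemma sum_card_neighborFinset_inter_union_le (hdisj : Disjoint C1 C2) (hC1 : pIndep G 1 C1)
    (hC2 : pIndep G 2 C2) : ∑ v ∈ C1 ∪ C2, #(G.neighborFinset v ∩ (C1 ∪ C2)) ≤ 2 * #C1 := by
  have hleft : ∀ v ∈ C1, G.neighborFinset v ∩ (C1 ∪ C2) = G.neighborFinset v ∩ C2 := fun v hv ↦ by
    rw [inter_union_distrib_left, hC1.neighborFinset_inter_eq_empty le_rfl hv, empty_union]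
  have hright : ∀ v ∈ C2, G.neighborFinset v ∩ (C1 ∪ C2) = G.neighborFinset v ∩ C1 := fun v hv ↦ by
    rw [inter_union_distrib_left, hC2.neighborFinset_inter_eq_empty one_le_two hv, union_empty]
  calc ∑ v ∈ C1 ∪ C2, #(G.neighborFinset v ∩ (C1 ∪ C2))
      = ∑ v ∈ C1, #(G.neighborFinset v ∩ C2) + ∑ v ∈ C2, #(G.neighborFinset v ∩ C1) := by
        rw [sum_union hdisj, sum_congr rfl fun v hv ↦ congrArg card (hleft v hv),
          sum_congr rfl fun v hv ↦ congrArg card (hright v hv)]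
    _ = 2 * ∑ v ∈ C1, #(G.neighborFinset v ∩ C2) := by
        rw [G.sum_card_neighborFinset_inter_comm C2 C1, two_mul]
    _ ≤ 2 * #C1 := by
        gcongr
        exact hC2.sum_card_neighborFinset_inter_le le_rfl C1

lemma four_mul_card_add_six_mul_card_le (hreg : G.IsRegularOfDegree 3) (hdisj : Disjoint C1 C2)
    (hC1 : pIndep G 1 C1) (hC2 : pIndep G 2 C2) :
    4 * #C1 + 6 * #C2 ≤ 3 * Fintype.card V := by
  have hcount := hreg.mul_card_le (C1 ∪ C2)
  have hinside := sum_card_neighborFinset_inter_union_le hdisj hC1 hC2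
  have hle : #C1 + #C2 ≤ Fintype.card V := card_union_of_disjoint hdisj ▸ card_le_univ _
  rw [card_compl, card_union_of_disjoint hdisj] at hcount
  omega

end

theorem stmt6 {V : Type*} [Fintype V] [DecidableEq V] (G : SimpleGraph V)
    [DecidableRel G.Adj] (hreg : G.IsRegularOfDegree 3)
    (C1 C2 : Finset V) (hdisj : Disjoint C1 C2)
    (hC1 : pIndep G 1 C1) (hC2 : pIndep G 2 C2)
    (hsmall : (C1.card : ℝ) < 0.456 * Fintype.card V) :
    (C1.card : ℝ) + C2.card < 0.652 * Fintype.card V := by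
  have key : (4 * C1.card + 6 * C2.card : ℝ) ≤ 3 * Fintype.card V := by
    exact_mod_cast four_mul_card_add_six_mul_card_le hreg hdisj hC1 hC2
  linarith
end

section
/- Let G be a cubic graph with girth at least 9, and let C1, C2, C4 be pairwise disjoint vertex sets with C_i i-independent for i ∈ {1,2,4}. Let Q be the set of vertices of C1 with no neighbor in C2, and call an edge of G an L-edge if both its endpoints lie outside C1 ∪ C2. Then for every a ∈ C4, if the number of L-edges within the tree induced by B_G(a,2) plus the number of Q-vertices in B_G(a,2) equals j with j ≤ 2, then B_G(a,2) contains at least 3 − j vertices of C2. -/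
open SimpleGraph Finset

lemma no_tri {V : Type*} (G : SimpleGraph V) (hg : (9 : ℕ∞) ≤ G.egirth)
    {x y z : V} (h1 : G.Adj x y) (h2 : G.Adj y z) (h3 : G.Adj z x) : False := by
  have hw : (Walk.cons h1 (Walk.cons h2 (Walk.cons h3 Walk.nil))).IsCycle := by
    simp [Walk.isCycle_def, Walk.isTrail_def, Sym2.eq_iff]
    aesop
  have h := le_egirth.mp hg x _ hw
  simp only [Walk.length_cons, Walk.length_nil, Nat.cast_ofNat] at h
  norm_num at h

lemma no_quad {V : Type*} (G : SimpleGraph V) (hg : (9 : ℕ∞) ≤ G.egirth)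
    {x y z w : V} (h1 : G.Adj x y) (h2 : G.Adj y z) (h3 : G.Adj z w) (h4 : G.Adj w x)
    (hxz : x ≠ z) (hyw : y ≠ w) : False := by
  have hw : (Walk.cons h1 (Walk.cons h2 (Walk.cons h3 (Walk.cons h4 Walk.nil)))).IsCycle := by
    simp [Walk.isCycle_def, Walk.isTrail_def, Sym2.eq_iff]
    aesop
  have h := le_egirth.mp hg x _ hw
  simp only [Walk.length_cons, Walk.length_nil, Nat.cast_ofNat] at h
  norm_num at h

open Classical in
theorem stmt8 {V : Type*} [Fintype V] [DecidableEq V] (G : SimpleGraph V)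
    [DecidableRel G.Adj] (hreg : G.IsRegularOfDegree 3)
    (hg : (9 : ℕ∞) ≤ G.egirth)
    (C1 C2 C4 : Finset V)
    (h12 : Disjoint C1 C2) (h14 : Disjoint C1 C4) (h24 : Disjoint C2 C4)
    (hC1 : pIndep G 1 C1) (hC2 : pIndep G 2 C2) (hC4 : pIndep G 4 C4)
    (a : V) (ha : a ∈ C4) (j : ℕ) (hj : j ≤ 2)
    (hcount :
      (G.edgeFinset.filter (fun e => (∀ v ∈ e, v ∉ C1 ∪ C2) ∧
        ∀ v ∈ e, v ∈ Finset.univ.filter (fun w => G.edist a w ≤ (2 : ℕ∞)))).card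
      + ((Finset.univ.filter (fun w => G.edist a w ≤ (2 : ℕ∞))).filter
          (fun v => v ∈ C1 ∧ ∀ u ∈ C2, ¬ G.Adj v u)).card = j) :
    3 - j ≤ ((Finset.univ.filter (fun w => G.edist a w ≤ (2 : ℕ∞))) ∩ C2).card := by
  classical
  set B : Finset V := Finset.univ.filter (fun w => G.edist a w ≤ (2 : ℕ∞)) with hB
  have ha1 : a ∉ C1 := fun h => (Finset.disjoint_left.mp h14 h) ha
  have ha2 : a ∉ C2 := fun h => (Finset.disjoint_left.mp h24 h) ha
  have hmemB : ∀ {w : V}, G.edist a w ≤ 2 → w ∈ B := by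
    intro w hw; simp [hB, hw]
  have hed1 : ∀ {x y : V}, G.Adj x y → G.edist x y ≤ 1 :=
    fun h => (edist_eq_one_iff_adj.mpr h).le
  have haB : a ∈ B := hmemB (by simp [edist_self])
  have hnbB : ∀ {b : V}, G.Adj a b → b ∈ B :=
    fun h => hmemB ((hed1 h).trans (by norm_num))
  have hnbB2 : ∀ {b u : V}, G.Adj a b → G.Adj b u → u ∈ B := by
    intro b u h1 h2
    refine hmemB (le_trans (G.edist_triangle (v := b)) ?_)
    calc G.edist a b + G.edist b u ≤ 1 + 1 := add_le_add (hed1 h1) (hed1 h2)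
      _ = 2 := by norm_num
  set N : Finset V := G.neighborFinset a with hNdef
  have hN : N.card = 3 := by
    rw [hNdef, card_neighborFinset_eq_degree]; exact hreg a
  set NL := N.filter (fun b => b ∉ C1 ∧ b ∉ C2) with hNL
  set NQ := N.filter (fun b => b ∈ C1 ∧ ∀ u ∈ C2, ¬ G.Adj b u) with hNQ
  set N2 := N.filter (fun b => b ∈ C2) with hN2
  set N1 := N.filter (fun b => b ∈ C1 ∧ ∃ u ∈ C2, G.Adj b u) with hN1
  have hcover : N ⊆ NL ∪ NQ ∪ N2 ∪ N1 := by
    intro b hb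
    simp only [Finset.mem_union, hNL, hNQ, hN2, hN1, Finset.mem_filter]
    by_cases hb2 : b ∈ C2
    · tauto
    by_cases hb1 : b ∈ C1
    · by_cases hq : ∀ u ∈ C2, ¬ G.Adj b u
      · tauto
      · push_neg at hq
        tauto
    · tauto
  have hsum : 3 ≤ NL.card + NQ.card + N2.card + N1.card := by
    calc 3 = N.card := hN.symm
      _ ≤ (NL ∪ NQ ∪ N2 ∪ N1).card := Finset.card_le_card hcover
      _ ≤ (NL ∪ NQ ∪ N2).card + N1.card := Finset.card_union_le _ _
      _ ≤ (NL ∪ NQ).card + N2.card + N1.card := by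
          gcongr; exact Finset.card_union_le _ _
      _ ≤ NL.card + NQ.card + N2.card + N1.card := by
          gcongr; exact Finset.card_union_le _ _
  -- NL injects into L-edges
  have hL : NL.card ≤ (G.edgeFinset.filter (fun e => (∀ v ∈ e, v ∉ C1 ∪ C2) ∧
        ∀ v ∈ e, v ∈ B)).card := by
    apply Finset.card_le_card_of_injOn (fun b => s(a, b))
    · intro b hb
      simp only [Finset.mem_coe, hNL, Finset.mem_filter, hNdef, mem_neighborFinset] at hb
      obtain ⟨hadj, hb1, hb2⟩ := hb
      simp only [Finset.mem_coe, Finset.mem_filter, mem_edgeFinset, mem_edgeSet]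
      refine ⟨hadj, ?_, ?_⟩
      · intro v hv
        rw [Sym2.mem_iff] at hv
        simp only [Finset.mem_union]
        rcases hv with rfl | rfl
        · exact fun h => h.elim ha1 ha2
        · exact fun h => h.elim hb1 hb2
      · intro v hv
        rw [Sym2.mem_iff] at hv
        rcases hv with rfl | rfl
        · exact haB
        · exact hnbB hadj
    · intro b hb b' hb' h
      simp only [Sym2.eq_iff] at h
      rcases h with ⟨-, h⟩ | ⟨h1, h2⟩
      · exact h
      · rw [← h1, h2]
  -- NQ injects into Q-ball vertices
  have hQ : NQ.card ≤ (B.filter (fun v => v ∈ C1 ∧ ∀ u ∈ C2, ¬ G.Adj v u)).card := by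
    apply Finset.card_le_card
    intro b hb
    simp only [hNQ, Finset.mem_filter, hNdef, mem_neighborFinset] at hb
    exact Finset.mem_filter.mpr ⟨hnbB hb.1, hb.2⟩
  -- N2 ∪ N1 injects into B ∩ C2
  have hdisj21 : Disjoint N2 N1 := by
    rw [Finset.disjoint_left]
    intro b hb hb'
    simp only [hN2, hN1, Finset.mem_filter] at hb hb'
    exact (Finset.disjoint_left.mp h12 hb'.2.1) hb.2
  have h2card : N2.card + N1.card ≤ (B ∩ C2).card := by
    rw [← Finset.card_union_of_disjoint hdisj21]
    set f : V → V := fun b =>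
      if b ∈ C2 then b else
        if h : ∃ u, u ∈ C2 ∧ G.Adj b u then h.choose else b with hf
    have hspec : ∀ {b : V}, b ∈ N1 → b ∉ C2 → f b ∈ C2 ∧ G.Adj b (f b) := by
      intro b hb hb2
      simp only [hN1, Finset.mem_filter] at hb
      obtain ⟨-, -, u, hu, hadj⟩ := hb
      have h : ∃ u, u ∈ C2 ∧ G.Adj b u := ⟨u, hu, hadj⟩
      simp only [hf, if_neg hb2, dif_pos h]
      exact h.choose_spec
    apply Finset.card_le_card_of_injOn f
    · intro b hb
      rw [Finset.mem_coe, Finset.mem_union] at hb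
      rcases hb with hb | hb
      · simp only [hN2, Finset.mem_filter, hNdef, mem_neighborFinset] at hb
        simp only [hf, if_pos hb.2]
        exact Finset.mem_inter.mpr ⟨hnbB hb.1, hb.2⟩
      · by_cases hb2 : b ∈ C2
        · simp only [hf, if_pos hb2]
          have hbN : G.Adj a b := by
            simp only [hN1, Finset.mem_filter, hNdef, mem_neighborFinset] at hb
            exact hb.1
          exact Finset.mem_inter.mpr ⟨hnbB hbN, hb2⟩
        · obtain ⟨hfc2, hfadj⟩ := hspec hb hb2
          have hbN : G.Adj a b := by
            simp only [hN1, Finset.mem_filter, hNdef, mem_neighborFinset] at hb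
            exact hb.1
          exact Finset.mem_inter.mpr ⟨hnbB2 hbN hfadj, hfc2⟩
    · intro b hb b' hb' heq
      have hbF : b ∈ N2 ∪ N1 := Finset.mem_coe.mp hb
      have hbF' : b' ∈ N2 ∪ N1 := Finset.mem_coe.mp hb'
      have hfid : ∀ c, c ∈ C2 → f c = c := by
        intro c hc
        simp only [hf]
        exact if_pos hc
      have hmemadj : ∀ {c : V}, c ∈ N2 ∪ N1 → G.Adj a c := by
        intro c hc
        rw [Finset.mem_union] at hc
        rcases hc with hc | hc <;>
        · simp only [hN2, hN1, Finset.mem_filter, hNdef, mem_neighborFinset] at hc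
          exact hc.1
      have hbN : G.Adj a b := hmemadj hbF
      have hbN' : G.Adj a b' := hmemadj hbF'
      by_contra hne
      have hN1mem : ∀ {c : V}, c ∈ N2 ∪ N1 → c ∉ C2 → c ∈ N1 := by
        intro c hc hc2
        rw [Finset.mem_union] at hc
        rcases hc with hc | hc
        · simp only [hN2, Finset.mem_filter] at hc
          exact absurd hc.2 hc2
        · exact hc
      by_cases hb2 : b ∈ C2 <;> by_cases hb2' : b' ∈ C2
      · exact hne (((hfid b hb2).symm.trans heq).trans (hfid b' hb2'))
      · obtain ⟨hc2, hadj⟩ := hspec (hN1mem hbF' hb2') hb2'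
        have hbeq : b = f b' := (hfid b hb2).symm.trans heq
        have hadj2 : G.Adj b' b := by rw [hbeq]; exact hadj
        exact no_tri G hg hbN' hadj2 hbN.symm
      · obtain ⟨hc2, hadj⟩ := hspec (hN1mem hbF hb2) hb2
        have hbeq : b' = f b := (hfid b' hb2').symm.trans heq.symm
        have hadj2 : G.Adj b b' := by rw [hbeq]; exact hadj
        exact no_tri G hg hbN hadj2 hbN'.symm
      · obtain ⟨hc2, hadj⟩ := hspec (hN1mem hbF hb2) hb2
        obtain ⟨hc2', hadj'⟩ := hspec (hN1mem hbF' hb2') hb2'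
        have hadj'2 : G.Adj b' (f b) := by rw [heq]; exact hadj'
        have hau : a ≠ f b := fun h => ha2 (h ▸ hc2)
        exact no_quad G hg hbN hadj hadj'2.symm hbN'.symm hau hne
  omega
end

section
/- Let G be a cubic graph on n vertices with girth at least 9. Let C1, C2, C4 be pairwise disjoint sets with C_i i-independent for i ∈ {1,2,4}, let Q be the set of vertices of C1 without a neighbor in C2, q = |Q|, and ℓ the number of edges with both endpoints outside C1 ∪ C2. Then 3|C4| ≤ ℓ + q + |C2|. -/
/-!
Count the `3 |C4|` darts leaving `C4`. A dart `v → u` whose head lies outside `C1 ∪ C2` gives the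
edge `vu`, which is counted by `ℓ`; distinct such darts give distinct edges because `C4` is
independent. A dart whose head `u` lies in `C1 ∪ C2` is charged to `u` itself if `u ∈ C2` or
`u ∈ Q`, and otherwise to a neighbour of `u` in `C2`. Two darts charged to the same vertex `x`
have tails at distance at most `4`, hence a common tail `v ≠ x`; since the girth is at least `5`,
`v` has only one neighbour at distance at most `1` from `x`, so the darts coincide.
-/

open SimpleGraph Finset

namespace SimpleGraph

variable {V : Type*} {G : SimpleGraph V}

lemma egirth_le_three {a b c : V} (hab : G.Adj a b) (hbc : G.Adj b c) (hca : G.Adj c a) :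
    G.egirth ≤ 3 := by
  have hc : (Walk.cons hab (Walk.cons hbc (Walk.cons hca Walk.nil))).IsCycle := by
    simp [Walk.isCycle_def, Walk.isTrail_def, hab.ne, hbc.ne, hca.ne, hca.ne', hab.ne',
      Sym2.eq, Sym2.rel_iff']
  simpa using egirth_le_length hc

lemma egirth_le_four {a b c d : V} (hab : G.Adj a b) (hbc : G.Adj b c) (hcd : G.Adj c d)
    (hda : G.Adj d a) (hac : a ≠ c) (hbd : b ≠ d) : G.egirth ≤ 4 := by
  have hc : (Walk.cons hab (Walk.cons hbc (Walk.cons hcd (Walk.cons hda Walk.nil)))).IsCycle := by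
    simp [Walk.isCycle_def, Walk.isTrail_def, hab.ne, hbc.ne, hcd.ne, hda.ne, hac, hbd,
      Sym2.eq, Sym2.rel_iff', hab.ne', hda.ne', hac.symm]
  simpa using egirth_le_length hc

lemma eq_of_adj_of_edist_le_one (hg : 5 ≤ G.egirth) {v u u' x : V} (hu : G.Adj v u)
    (hu' : G.Adj v u') (hvx : v ≠ x) (hux : G.edist u x ≤ 1) (hu'x : G.edist u' x ≤ 1) :
    u = u' := by
  by_contra hne
  have small_cycle : G.egirth ≤ 4 := by
    rw [edist_le_one_iff_adj_or_eq] at hux hu'x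
    rcases hux with hux | rfl <;> rcases hu'x with hu'x | rfl
    · exact egirth_le_four hu hux hu'x.symm hu'.symm hvx hne
    · exact (egirth_le_three hu hux hu'.symm).trans (by norm_num)
    · exact (egirth_le_three hu hu'x.symm hu'.symm).trans (by norm_num)
    · exact (hne rfl).elim
  exact absurd (hg.trans small_cycle) (by norm_num)

end SimpleGraph

section pIndep

variable {V : Type*} {G : SimpleGraph V}

lemma pIndep.eq_of_edist_le_s15 {i : ℕ} {S : Finset V} (hS : pIndep G i S) {x y : V} (hx : x ∈ S)
    (hy : y ∈ S) (hxy : G.edist x y ≤ i) : x = y := by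
  by_contra hne
  have := (hS x hx y hy hne).trans hxy
  norm_cast at this
  omega

lemma pIndep.mono {i j : ℕ} {S : Finset V} (hS : pIndep G i S) (hji : j ≤ i) : pIndep G j S :=
  fun x hx y hy hne => le_trans (by exact_mod_cast Nat.succ_le_succ hji) (hS x hx y hy hne)

end pIndep

namespace SimpleGraph

variable {V : Type*} {G : SimpleGraph V}

open Classical in
noncomputable def anchor (G : SimpleGraph V) (C2 : Finset V) (u : V) : V :=
  if h : u ∉ C2 ∧ ∃ w ∈ C2, G.Adj u w then h.2.choose else u

lemma edist_anchor_le_one (C2 : Finset V) (u : V) : G.edist u (anchor G C2 u) ≤ 1 := by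
  rw [edist_le_one_iff_adj_or_eq, anchor]
  split_ifs with h
  · exact .inl h.2.choose_spec.2
  · exact .inr rfl

lemma anchor_mem {C1 C2 : Finset V} {u : V} (hu : u ∈ C1 ∨ u ∈ C2) :
    anchor G C2 u ∈ C1 ∧ (∀ w ∈ C2, ¬ G.Adj (anchor G C2 u) w) ∨ anchor G C2 u ∈ C2 := by
  rw [anchor]
  split_ifs with h
  · exact .inr h.2.choose_spec.1
  · simp only [not_and, not_exists] at h
    by_cases hu2 : u ∈ C2
    · exact .inr hu2
    · exact .inl ⟨hu.resolve_right hu2, h hu2⟩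

section Counting

variable [Fintype V] [DecidableEq V] (G) [DecidableRel G.Adj]

lemma IsRegularOfDegree.card_darts_fst_mem {d : ℕ} (hreg : G.IsRegularOfDegree d)
    (S : Finset V) :
    #{e : G.Dart | e.fst ∈ S} = d * #S := by
  rw [← sum_card_fiberwise_eq_card_filter]
  simp only [dart_fst_fiber_card_eq_degree, hreg.degree_eq, sum_const, smul_eq_mul, mul_comm]

lemma card_darts_fst_mem_snd_notMem_le {S A : Finset V} (hS : pIndep G 1 S)
    (hAS : Disjoint A S) :
    #{e : G.Dart | e.fst ∈ S ∧ e.snd ∉ A} ≤ #{x ∈ G.edgeFinset | ∀ v ∈ x, v ∉ A} := by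
  refine card_le_card_of_injOn Dart.edge (fun e he => ?_) (fun e he e' he' hee' => ?_)
  · simp only [coe_filter, mem_univ, true_and, Set.mem_ofPred_eq] at he ⊢
    refine ⟨mem_edgeFinset.mpr e.edge_mem, fun v hv => ?_⟩
    rcases Sym2.mem_iff.mp hv with rfl | rfl
    · exact disjoint_right.mp hAS he.1
    · exact he.2
  · simp only [coe_filter, mem_univ, true_and, Set.mem_ofPred_eq] at he he'
    rcases (dart_edge_eq_iff e e').mp hee' with h | rfl
    · exact h
    · exact absurd (hS.eq_of_edist_le_s15 he.1 he'.1 (edist_eq_one_iff_adj.mpr e'.adj.symm).le)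
        e'.snd_ne_fst

lemma card_darts_fst_mem_snd_mem_le (hg : 5 ≤ G.egirth) {S C1 C2 : Finset V}
    (hS : pIndep G 4 S) (hCS : Disjoint (C1 ∪ C2) S) :
    #{e : G.Dart | e.fst ∈ S ∧ e.snd ∈ C1 ∪ C2} ≤
      #(C1.filter (fun v => ∀ w ∈ C2, ¬ G.Adj v w) ∪ C2) := by
  refine card_le_card_of_injOn (fun e => anchor G C2 e.snd) (fun e he => ?_)
    (fun e he e' he' hee' => ?_)
  · simp only [coe_filter, mem_univ, true_and, Set.mem_ofPred_eq] at he
    simpa only [mem_coe, mem_union, mem_filter] using anchor_mem (G := G) (mem_union.mp he.2)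
  · simp only [coe_filter, mem_univ, true_and, Set.mem_ofPred_eq] at he he' hee'
    set x := anchor G C2 e.snd
    have hx : G.edist e.snd x ≤ 1 := edist_anchor_le_one C2 e.snd
    have hx' : G.edist e'.snd x ≤ 1 := hee' ▸ edist_anchor_le_one C2 e'.snd
    have hfst : e.fst = e'.fst := by
      refine hS.eq_of_edist_le_s15 he.1 he'.1 ?_
      calc G.edist e.fst e'.fst
          ≤ G.edist e.fst x + G.edist x e'.fst := G.edist_triangle
        _ ≤ (G.edist e.fst e.snd + G.edist e.snd x) +
              (G.edist x e'.snd + G.edist e'.snd e'.fst) :=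
            add_le_add G.edist_triangle G.edist_triangle
        _ ≤ (1 + 1) + (1 + 1) := by
            rw [edist_comm (u := x)]
            gcongr
            · exact (edist_eq_one_iff_adj.mpr e.adj).le
            · exact (edist_eq_one_iff_adj.mpr e'.adj.symm).le
        _ = 4 := by norm_num
    have hx_mem : x ∈ C1 ∪ C2 :=
      mem_union.mpr ((anchor_mem (mem_union.mp he.2)).imp_left And.left)
    have hx_ne : e.fst ≠ x := fun h => disjoint_right.mp hCS he.1 (h ▸ hx_mem)
    have hsnd : e.snd = e'.snd :=
      eq_of_adj_of_edist_le_one hg e.adj (hfst ▸ e'.adj) hx_ne hx hx'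
    exact Dart.ext _ _ (Prod.ext hfst hsnd)

end Counting

end SimpleGraph

open Classical in
theorem stmt15_general {V : Type*} [Fintype V] [DecidableEq V] (G : SimpleGraph V)
    [DecidableRel G.Adj] (hreg : G.IsRegularOfDegree 3)
    (hg : (9 : ℕ∞) ≤ G.egirth)
    (C1 C2 C4 : Finset V)
    (h14 : Disjoint C1 C4) (h24 : Disjoint C2 C4)
    (hC4 : pIndep G 4 C4) :
    3 * C4.card ≤
      (G.edgeFinset.filter (fun e => ∀ v ∈ e, v ∉ C1 ∪ C2)).card
      + (C1.filter (fun v => ∀ u ∈ C2, ¬ G.Adj v u)).card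
      + C2.card := by
  have hdisj : Disjoint (C1 ∪ C2) C4 := disjoint_union_left.mpr ⟨h14, h24⟩
  have hsplit := card_filter_add_card_filter_not (s := {e : G.Dart | e.fst ∈ C4})
    (fun e => e.snd ∈ C1 ∪ C2)
  rw [filter_filter, filter_filter, hreg.card_darts_fst_mem] at hsplit
  have hin := card_darts_fst_mem_snd_mem_le G ((by norm_num : (5 : ℕ∞) ≤ 9).trans hg) hC4 hdisj
  have hout := card_darts_fst_mem_snd_notMem_le G (hC4.mono (by norm_num)) hdisj
  have hunion := card_union_le (C1.filter (fun v => ∀ u ∈ C2, ¬ G.Adj v u)) C2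
  omega

open Classical in
theorem stmt15 {V : Type*} [Fintype V] [DecidableEq V] (G : SimpleGraph V)
    [DecidableRel G.Adj] (hreg : G.IsRegularOfDegree 3)
    (hg : (9 : ℕ∞) ≤ G.egirth)
    (C1 C2 C4 : Finset V)
    (h12 : Disjoint C1 C2) (h14 : Disjoint C1 C4) (h24 : Disjoint C2 C4)
    (hC1 : pIndep G 1 C1) (hC2 : pIndep G 2 C2) (hC4 : pIndep G 4 C4) :
    3 * C4.card ≤
      (G.edgeFinset.filter (fun e => ∀ v ∈ e, v ∉ C1 ∪ C2)).card
      + (C1.filter (fun v => ∀ u ∈ C2, ¬ G.Adj v u)).card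
      + C2.card :=
  stmt15_general G hreg hg C1 C2 C4 h14 h24 hC4
end
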